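/- Nonnegativity is invariant in the surveillance-triggered behavioral-epidemiological model: if U(0), A(0), C(0), Q(0), I(0), R(0) are all nonnegative, then U(t), A(t), C(t), Q(t), I(t), R(t) are all nonnegative for every t ≥ 0. -/

import Mathlib

/-!
Every equation of the model has the linear form `f' = k(t) f + r(t)` with a continuous
coefficient `k` and a source `r`, and the compartments can be ordered (`U`, `A`, `I`, then `C`,
`Q`, `R`) so that the source of each one is a nonnegative combination of compartments already
known to be nonnegative. For such an equation, on a compact interval where `|k| ≤ M`, the
function `f` cannot cross below the barrier `-ε e^{(M+1)t}`: where it touches it,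
`f' ≥ -|k| |f|` is strictly larger than the slope of the barrier. Letting `ε → 0` gives `f ≥ 0`.
-/

open Set Real

/-- The surveillance-triggered behavioral-epidemiological model:
`U' = −β_i U A/N − β U I/N`, `A' = β_i U A/N − (1−ε) β A I/N − γ_i A`,
`C' = γ_i A − β C I/N`, `Q' = φ β [U + C + (1−ε)A] I/N − γ Q`,
`I' = (1−φ) β [U + C + (1−ε)A] I/N − γ I`, `R' = γ(Q + I)` on `[0,∞)`. -/
def SurveillanceModel (N β γ βi γi ε φ : ℝ) (U A C Q I R : ℝ → ℝ) : Prop :=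
  ∀ t : ℝ, 0 ≤ t →
    HasDerivAt U (-βi * U t * A t / N - β * U t * I t / N) t ∧
    HasDerivAt A (βi * U t * A t / N - (1 - ε) * β * A t * I t / N - γi * A t) t ∧
    HasDerivAt C (γi * A t - β * C t * I t / N) t ∧
    HasDerivAt Q (φ * β * (U t + C t + (1 - ε) * A t) * I t / N - γ * Q t) t ∧
    HasDerivAt I ((1 - φ) * β * (U t + C t + (1 - ε) * A t) * I t / N - γ * I t) t ∧
    HasDerivAt R (γ * (Q t + I t)) t

theorem nonneg_of_hasDerivWithinAt_linear {f k r : ℝ → ℝ} {a b M : ℝ}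
    (hf : ContinuousOn f (Icc a b))
    (hf' : ∀ t ∈ Ico a b, HasDerivWithinAt f (k t * f t + r t) (Ici t) t)
    (hk : ∀ t ∈ Ico a b, |k t| ≤ M) (hr : ∀ t ∈ Ico a b, 0 ≤ r t) (ha : 0 ≤ f a) :
    ∀ t ∈ Icc a b, 0 ≤ f t := by
  intro t₁ ht₁
  refine le_of_forall_pos_le_add fun ε hε => ?_
  set B : ℝ → ℝ := fun t => ε * exp ((M + 1) * (t - t₁)) with hB_def
  have hB_pos : ∀ t, 0 < B t := fun t => mul_pos hε (exp_pos _)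
  have hB : ∀ t, HasDerivAt B ((M + 1) * B t) t := fun t =>
    ((((hasDerivAt_id t).sub_const t₁).const_mul (M + 1)).exp.const_mul ε).congr_deriv
      (by simp only [hB_def, id]; ring)
  have barrier : ∀ t ∈ Ico a b, -f t = B t → -(k t * f t + r t) < (M + 1) * B t := by
    intro t ht hft
    have hkB : k t * B t ≤ M * B t :=
      mul_le_mul_of_nonneg_right ((le_abs_self _).trans (hk t ht)) (hB_pos t).le
    rw [show f t = -B t by linarith, mul_neg]
    linarith [hr t ht, hB_pos t]
  have := image_le_of_deriv_right_lt_deriv_boundary hf.neg (fun t ht => (hf' t ht).neg)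
    (show -f a ≤ B a by linarith [hB_pos a]) hB barrier ht₁
  simp only [hB_def, Pi.neg_apply, sub_self, mul_zero, exp_zero, mul_one] at this
  linarith

theorem nonneg_of_hasDerivAt_linear {f k r : ℝ → ℝ} {a : ℝ}
    (hf : ∀ t ∈ Ici a, HasDerivAt f (k t * f t + r t) t) (hk : ContinuousOn k (Ici a))
    (hr : ∀ t ∈ Ici a, 0 ≤ r t) (ha : 0 ≤ f a) : ∀ t ∈ Ici a, 0 ≤ f t := by
  intro t ht
  have hIcc : Icc a t ⊆ Ici a := Icc_subset_Ici_self
  obtain ⟨M, hM⟩ := isCompact_Icc.exists_bound_of_continuousOn (hk.mono hIcc)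
  refine nonneg_of_hasDerivWithinAt_linear (M := M)
    (HasDerivAt.continuousOn fun x hx => hf x (hIcc hx))
    (fun x hx => (hf x (hIcc (Ico_subset_Icc_self hx))).hasDerivWithinAt)
    (fun x hx => by simpa using hM x (Ico_subset_Icc_self hx))
    (fun x hx => hr x (hIcc (Ico_subset_Icc_self hx))) ha t ⟨ht, le_rfl⟩

namespace SurveillanceModel

variable {N β γ βi γi ε φ : ℝ} {U A C Q I R : ℝ → ℝ}

theorem continuousOn_U (h : SurveillanceModel N β γ βi γi ε φ U A C Q I R) :
    ContinuousOn U (Ici 0) :=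
  HasDerivAt.continuousOn fun t ht => (h t ht).1

theorem continuousOn_A (h : SurveillanceModel N β γ βi γi ε φ U A C Q I R) :
    ContinuousOn A (Ici 0) :=
  HasDerivAt.continuousOn fun t ht => (h t ht).2.1

theorem continuousOn_C (h : SurveillanceModel N β γ βi γi ε φ U A C Q I R) :
    ContinuousOn C (Ici 0) :=
  HasDerivAt.continuousOn fun t ht => (h t ht).2.2.1

theorem continuousOn_I (h : SurveillanceModel N β γ βi γi ε φ U A C Q I R) :
    ContinuousOn I (Ici 0) :=
  HasDerivAt.continuousOn fun t ht => (h t ht).2.2.2.2.1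

theorem U_nonneg (h : SurveillanceModel N β γ βi γi ε φ U A C Q I R) (h0 : 0 ≤ U 0) :
    ∀ t ∈ Ici 0, 0 ≤ U t := by
  have := h.continuousOn_A
  have := h.continuousOn_I
  exact nonneg_of_hasDerivAt_linear (k := fun t => (-βi * A t - β * I t) / N) (r := 0)
    (fun t ht => (h t ht).1.congr_deriv (by simp only [Pi.zero_apply]; ring))
    (by fun_prop) (fun _ _ => le_rfl) h0

theorem A_nonneg (h : SurveillanceModel N β γ βi γi ε φ U A C Q I R) (h0 : 0 ≤ A 0) :
    ∀ t ∈ Ici 0, 0 ≤ A t := by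
  have := h.continuousOn_U
  have := h.continuousOn_I
  exact nonneg_of_hasDerivAt_linear
    (k := fun t => (βi * U t - (1 - ε) * β * I t) / N - γi) (r := 0)
    (fun t ht => (h t ht).2.1.congr_deriv (by simp only [Pi.zero_apply]; ring))
    (by fun_prop) (fun _ _ => le_rfl) h0

theorem I_nonneg (h : SurveillanceModel N β γ βi γi ε φ U A C Q I R) (h0 : 0 ≤ I 0) :
    ∀ t ∈ Ici 0, 0 ≤ I t := by
  have := h.continuousOn_U
  have := h.continuousOn_A
  have := h.continuousOn_C
  exact nonneg_of_hasDerivAt_linear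
    (k := fun t => (1 - φ) * β * (U t + C t + (1 - ε) * A t) / N - γ) (r := 0)
    (fun t ht => (h t ht).2.2.2.2.1.congr_deriv (by simp only [Pi.zero_apply]; ring))
    (by fun_prop) (fun _ _ => le_rfl) h0

theorem C_nonneg (h : SurveillanceModel N β γ βi γi ε φ U A C Q I R) (hγi : 0 ≤ γi)
    (hA : ∀ t ∈ Ici 0, 0 ≤ A t) (h0 : 0 ≤ C 0) : ∀ t ∈ Ici 0, 0 ≤ C t := by
  have := h.continuousOn_I
  exact nonneg_of_hasDerivAt_linear (k := fun t => -β * I t / N) (r := fun t => γi * A t)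
    (fun t ht => (h t ht).2.2.1.congr_deriv (by ring))
    (by fun_prop) (fun t ht => mul_nonneg hγi (hA t ht)) h0

theorem Q_nonneg (h : SurveillanceModel N β γ βi γi ε φ U A C Q I R) (hN : 0 ≤ N) (hβ : 0 ≤ β)
    (hφ : 0 ≤ φ) (hε : ε ≤ 1) (hU : ∀ t ∈ Ici 0, 0 ≤ U t) (hA : ∀ t ∈ Ici 0, 0 ≤ A t)
    (hC : ∀ t ∈ Ici 0, 0 ≤ C t) (hI : ∀ t ∈ Ici 0, 0 ≤ I t) (h0 : 0 ≤ Q 0) :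
    ∀ t ∈ Ici 0, 0 ≤ Q t := by
  refine nonneg_of_hasDerivAt_linear (k := fun _ => -γ)
    (r := fun t => φ * β * (U t + C t + (1 - ε) * A t) * I t / N)
    (fun t ht => (h t ht).2.2.2.1.congr_deriv (by ring)) continuousOn_const (fun t ht => ?_) h0
  have hεA : 0 ≤ (1 - ε) * A t := mul_nonneg (sub_nonneg.mpr hε) (hA t ht)
  have hS := add_nonneg (add_nonneg (hU t ht) (hC t ht)) hεA
  exact div_nonneg (mul_nonneg (mul_nonneg (mul_nonneg hφ hβ) hS) (hI t ht)) hN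

theorem R_nonneg (h : SurveillanceModel N β γ βi γi ε φ U A C Q I R) (hγ : 0 ≤ γ)
    (hQ : ∀ t ∈ Ici 0, 0 ≤ Q t) (hI : ∀ t ∈ Ici 0, 0 ≤ I t) (h0 : 0 ≤ R 0) :
    ∀ t ∈ Ici 0, 0 ≤ R t :=
  nonneg_of_hasDerivAt_linear (k := 0) (r := fun t => γ * (Q t + I t))
    (fun t ht => (h t ht).2.2.2.2.2.congr_deriv (by simp only [Pi.zero_apply]; ring))
    continuousOn_const (fun t ht => mul_nonneg hγ (add_nonneg (hQ t ht) (hI t ht))) h0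

end SurveillanceModel

theorem surveillance_model_nonneg_invariant_general
    (N β γ βi γi ε φ : ℝ) (U A C Q I R : ℝ → ℝ)
    (hN : 0 < N) (hβ : 0 < β) (hγ : 0 < γ) (hγi : 0 < γi)
    (hε : ε ∈ Set.Icc (0:ℝ) 1) (hφ : φ ∈ Set.Icc (0:ℝ) 1)
    (hmodel : SurveillanceModel N β γ βi γi ε φ U A C Q I R)
    (hU0 : 0 ≤ U 0) (hA0 : 0 ≤ A 0) (hC0 : 0 ≤ C 0)
    (hQ0 : 0 ≤ Q 0) (hI0 : 0 ≤ I 0) (hR0 : 0 ≤ R 0) :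
    ∀ t : ℝ, 0 ≤ t →
      0 ≤ U t ∧ 0 ≤ A t ∧ 0 ≤ C t ∧ 0 ≤ Q t ∧ 0 ≤ I t ∧ 0 ≤ R t := by
  have hU := hmodel.U_nonneg hU0
  have hA := hmodel.A_nonneg hA0
  have hI := hmodel.I_nonneg hI0
  have hC := hmodel.C_nonneg hγi.le hA hC0
  have hQ := hmodel.Q_nonneg hN.le hβ.le hφ.1 hε.2 hU hA hC hI hQ0
  have hR := hmodel.R_nonneg hγ.le hQ hI hR0
  exact fun t ht => ⟨hU t ht, hA t ht, hC t ht, hQ t ht, hI t ht, hR t ht⟩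

/-- Nonnegativity is invariant in the surveillance-triggered
behavioral-epidemiological model: if `U 0, A 0, C 0, Q 0, I 0, R 0` are all nonnegative,
then `U t, A t, C t, Q t, I t, R t` are all nonnegative for every `t ≥ 0`. -/
theorem surveillance_model_nonneg_invariant
    (N β γ βi γi ε φ : ℝ) (U A C Q I R : ℝ → ℝ)
    (hN : 0 < N) (hβ : 0 < β) (hγ : 0 < γ) (hβi : 0 < βi) (hγi : 0 < γi)
    (hε : ε ∈ Set.Icc (0:ℝ) 1) (hφ : φ ∈ Set.Icc (0:ℝ) 1)
    (hmodel : SurveillanceModel N β γ βi γi ε φ U A C Q I R)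
    (hU0 : 0 ≤ U 0) (hA0 : 0 ≤ A 0) (hC0 : 0 ≤ C 0)
    (hQ0 : 0 ≤ Q 0) (hI0 : 0 ≤ I 0) (hR0 : 0 ≤ R 0) :
    ∀ t : ℝ, 0 ≤ t →
      0 ≤ U t ∧ 0 ≤ A t ∧ 0 ≤ C t ∧ 0 ≤ Q t ∧ 0 ≤ I t ∧ 0 ≤ R t :=
  surveillance_model_nonneg_invariant_general N β γ βi γi ε φ U A C Q I R hN hβ hγ hγi hε hφ hmodel
    hU0 hA0 hC0 hQ0 hI0 hR0
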